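/- Let H be a real inner product space, x : ι → H a family of points, and let A, B, C be pairwise disjoint nonempty finite subsets of ι. Then Ward's linkage satisfies the Lance–Williams update formula: δ(A ∪ B, C) = ((|A|+|C|)·δ(A,C) + (|B|+|C|)·δ(B,C) − |C|·δ(A,B)) / (|A|+|B|+|C|). -/

import Mathlib

open Finset

/-- The centroid `x̄_C = (1/|C|) ∑_{i∈C} x_i` of the cluster `C`. -/
noncomputable def centroid {ι H : Type*} [NormedAddCommGroup H] [InnerProductSpace ℝ H]
    (x : ι → H) (C : Finset ι) : H :=
  (C.card : ℝ)⁻¹ • ∑ i ∈ C, x i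

/-- The inertia (error sum of squares) `I(C) = ∑_{i∈C} ‖x_i − x̄_C‖²` of the cluster `C`. -/
noncomputable def inertia {ι H : Type*} [NormedAddCommGroup H] [InnerProductSpace ℝ H]
    (x : ι → H) (C : Finset ι) : ℝ :=
  ∑ i ∈ C, ‖x i - centroid x C‖ ^ 2

/-- The similarity sum `S(C) = ∑_{(i,j)∈C×C} ⟨x_i, x_j⟩` of the cluster `C`. -/
noncomputable def simSum {ι H : Type*} [NormedAddCommGroup H] [InnerProductSpace ℝ H]
    (x : ι → H) (C : Finset ι) : ℝ :=
  ∑ i ∈ C, ∑ j ∈ C, (inner ℝ (x i) (x j) : ℝ)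

/-- Ward's linkage `δ(C,C') = I(C ∪ C') − I(C) − I(C')`. -/
noncomputable def ward {ι H : Type*} [DecidableEq ι] [NormedAddCommGroup H]
    [InnerProductSpace ℝ H] (x : ι → H) (C C' : Finset ι) : ℝ :=
  inertia x (C ∪ C') - inertia x C - inertia x C'

/-!
Expanding the squares gives `I(C) = ∑_{i∈C} ‖x_i‖² - ‖s_C‖² / |C|` with `s_C = ∑_{i∈C} x_i`,
so `δ(C, C')` depends only on the masses `|C|, |C'|` and the sums `s_C, s_{C'}`. The
Lance–Williams formula thereby becomes an identity between three vectors with three positive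
weights, which is checked by expanding `‖a + b + c‖²` into inner products.
-/

section MergeCost

variable {H : Type*} [NormedAddCommGroup H] [InnerProductSpace ℝ H]

noncomputable def mergeCost (p q : ℝ) (a b : H) : ℝ :=
  ‖a‖ ^ 2 / p + ‖b‖ ^ 2 / q - ‖a + b‖ ^ 2 / (p + q)

theorem mergeCost_add_left {p q r : ℝ} (hp : 0 < p) (hq : 0 < q) (hr : 0 < r) (a b c : H) :
    mergeCost (p + q) r (a + b) c =
      ((p + r) * mergeCost p r a c + (q + r) * mergeCost q r b c - r * mergeCost p q a b)
        / (p + q + r) := by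
  simp only [mergeCost, norm_add_sq_real, inner_add_left]
  field_simp
  ring

end MergeCost

theorem inertia_eq_sum_norm_sq_sub {ι H : Type*} [NormedAddCommGroup H] [InnerProductSpace ℝ H]
    (x : ι → H) (C : Finset ι) :
    inertia x C = ∑ i ∈ C, ‖x i‖ ^ 2 - ‖∑ i ∈ C, x i‖ ^ 2 / C.card := by
  have hcard : (C.card : ℝ) * (C.card : ℝ)⁻¹ ^ 2 = (C.card : ℝ)⁻¹ := by
    rcases eq_or_ne (C.card : ℝ) 0 with h | h
    · simp [h]
    · field_simp
  simp only [inertia, _root_.centroid, norm_sub_sq_real, sum_add_distrib, sum_sub_distrib,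
    sum_const, nsmul_eq_mul, ← mul_sum, ← sum_inner, norm_smul, inner_smul_right,
    real_inner_self_eq_norm_sq]
  rw [Real.norm_eq_abs, abs_inv, Nat.abs_cast]
  linear_combination ‖∑ i ∈ C, x i‖ ^ 2 * hcard

theorem ward_eq_mergeCost {ι H : Type*} [DecidableEq ι] [NormedAddCommGroup H]
    [InnerProductSpace ℝ H] (x : ι → H) {C C' : Finset ι} (h : Disjoint C C') :
    ward x C C' = mergeCost C.card C'.card (∑ i ∈ C, x i) (∑ i ∈ C', x i) := by
  simp only [ward, mergeCost, inertia_eq_sum_norm_sq_sub, sum_union h, card_union_of_disjoint h]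
  push_cast
  ring

/-- Lance–Williams update formula for Ward's linkage:
`δ(A ∪ B, C) = ((|A|+|C|)·δ(A,C) + (|B|+|C|)·δ(B,C) − |C|·δ(A,B)) / (|A|+|B|+|C|)`. -/
theorem ward_lanceWilliams
    {ι H : Type*} [DecidableEq ι] [NormedAddCommGroup H] [InnerProductSpace ℝ H]
    (x : ι → H) (A B C : Finset ι)
    (hA : A.Nonempty) (hB : B.Nonempty) (hC : C.Nonempty)
    (hAB : Disjoint A B) (hAC : Disjoint A C) (hBC : Disjoint B C) :
    ward x (A ∪ B) C =
      ((A.card + C.card : ℝ) * ward x A C + (B.card + C.card : ℝ) * ward x B C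
        - (C.card : ℝ) * ward x A B) / (A.card + B.card + C.card : ℝ) := by
  rw [ward_eq_mergeCost x (disjoint_union_left.2 ⟨hAC, hBC⟩), ward_eq_mergeCost x hAC,
    ward_eq_mergeCost x hBC, ward_eq_mergeCost x hAB, sum_union hAB, card_union_of_disjoint hAB,
    Nat.cast_add]
  exact mergeCost_add_left (by exact_mod_cast hA.card_pos) (by exact_mod_cast hB.card_pos)
    (by exact_mod_cast hC.card_pos) _ _ _
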